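/- Let λ > 0 and μ > 0 be real numbers with λ ≠ μ, let β > 0, set c = μ/λ, and fix k ∈ ℤ. Define p̃_{k,n}(t) = ((1 + β·cⁿ)/(1 + β·cᵏ)) · e^{−(λ+μ)t} · c^{(k−n)/2} · I_{n−k}(2t√(λμ)) for n ∈ ℤ and t ≥ 0, where c^{(k−n)/2} denotes the real power and I_m is the modified Bessel function of the first kind of integer order. Then for every n ∈ ℤ the function t ↦ p̃_{k,n}(t) is differentiable on [0, ∞) and satisfies the forward Kolmogorov equations d/dt p̃_{k,n}(t) = λ̃_{n−1}·p̃_{k,n−1}(t) − (λ̃ₙ + μ̃ₙ)·p̃_{k,n}(t) + μ̃_{n+1}·p̃_{k,n+1}(t) with rates λ̃ₙ = λ·(1 + β·c^{n+1})/(1 + β·cⁿ) and μ̃ₙ = μ·(1 + β·c^{n−1})/(1 + β·cⁿ), together with the initial conditions p̃_{k,n}(0) = 1 if n = k and p̃_{k,n}(0) = 0 if n ≠ k. -/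

import Mathlib

/-- The modified Bessel function of the first kind of integer order `m`,
defined by the series `I_m(x) = ∑_{j ≥ max(0, -m)} (x/2)^{m+2j} / (j! (m+j)!)`;
the term is `0` when `m + j < 0`, which realizes the starting index `max(0, -m)`. -/
noncomputable def besselI (m : ℤ) (x : ℝ) : ℝ :=
  ∑' j : ℕ, if 0 ≤ m + (j : ℤ) then
      (x / 2) ^ (m + 2 * (j : ℤ)).toNat /
        ((Nat.factorial j : ℝ) * (Nat.factorial (m + (j : ℤ)).toNat : ℝ))
    else 0

/-!
Let `pₙ(t) = e^{-(λ+μ)t} c^{(k-n)/2} I_{n-k}(2t√(λμ))` be the transition probabilities of the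
constant-rate walk. Differentiating the Bessel series termwise gives `2 I_m' = I_{m-1} + I_{m+1}`
(the coefficient identity is `s / Γ(s+1) = 1 / Γ(s)`), which is exactly the forward equation
`pₙ' = λ p_{n-1} - (λ+μ) pₙ + μ p_{n+1}`. Since `νₙ = 1 + β cⁿ` satisfies
`λ ν_{n+1} + μ ν_{n-1} = (λ+μ) νₙ`, multiplying by `νₙ / νₖ` turns it into the forward equation with
rates `λ ν_{n+1} / νₙ` and `μ ν_{n-1} / νₙ`.
-/

open Real

lemma mul_inv_Gamma_add_one (s : ℝ) : s * (Gamma (s + 1))⁻¹ = (Gamma s)⁻¹ := by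
  rcases eq_or_ne s 0 with rfl | hs
  · simp [Gamma_zero]
  · rw [Gamma_add_one hs, mul_inv, mul_inv_cancel_left₀ hs]

lemma inv_Gamma_intCast_add_one_of_neg {n : ℤ} (hn : n < 0) : (Gamma (n + 1))⁻¹ = 0 := by
  obtain ⟨N, hN⟩ : ∃ N : ℕ, -(n + 1) = N := ⟨(-(n + 1)).toNat, by omega⟩
  have : (n : ℝ) + 1 = -N := by exact_mod_cast (by omega : n + 1 = -N)
  rw [this, Gamma_neg_nat_eq_zero, inv_zero]

lemma abs_inv_Gamma_intCast_add_one_le (n : ℤ) : |(Gamma (n + 1))⁻¹| ≤ 1 := by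
  rcases lt_or_ge n 0 with hn | hn
  · simp [inv_Gamma_intCast_add_one_of_neg hn]
  · lift n to ℕ using hn with N
    rw [Int.cast_natCast, Gamma_nat_eq_factorial, abs_inv, Nat.abs_cast]
    exact inv_le_one_of_one_le₀ (by exact_mod_cast N.factorial_pos)

/-- Writing `1 / n!` as `(Γ (n + 1))⁻¹`, which vanishes at the negative integers, lets the
index range over `ℤ` with the terms outside the summation range of `besselI` equal to zero. -/
noncomputable def besselTerm (m j : ℤ) (x : ℝ) : ℝ :=
  (Gamma (j + 1))⁻¹ * (Gamma (m + j + 1))⁻¹ * (x / 2) ^ (m + 2 * j)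

lemma besselTerm_eq_zero {m j : ℤ} (h : j < 0 ∨ m + j < 0) (x : ℝ) : besselTerm m j x = 0 := by
  rcases h with h | h
  · simp [besselTerm, inv_Gamma_intCast_add_one_of_neg h]
  · have := inv_Gamma_intCast_add_one_of_neg h
    push_cast at this
    simp [besselTerm, this]

lemma besselI_eq_tsum_besselTerm (m : ℤ) (x : ℝ) :
    besselI m x = ∑' j : ℕ, besselTerm m j x := by
  refine tsum_congr fun j => ?_
  split_ifs with h
  · obtain ⟨K, hK⟩ : ∃ K : ℕ, m + j = K := ⟨(m + j).toNat, by omega⟩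
    have hexp : m + 2 * (j : ℤ) = ((K + j : ℕ) : ℤ) := by push_cast; omega
    have hm : (m : ℝ) + j = K := by exact_mod_cast hK
    simp only [besselTerm, Int.cast_natCast]
    rw [hm, hK, hexp, zpow_natCast, Int.toNat_natCast, Int.toNat_natCast,
      Gamma_nat_eq_factorial, Gamma_nat_eq_factorial]
    field_simp
  · exact (besselTerm_eq_zero (Or.inr (by omega)) x).symm

lemma abs_besselTerm_le (m : ℤ) (j : ℕ) {x M : ℝ} (hM : 1 ≤ M) (hx : |x| ≤ 2 * M) :
    |besselTerm m j x| ≤ M ^ m.natAbs * (M ^ 2) ^ j / j.factorial := by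
  rcases lt_or_ge (m + j) 0 with h | h
  · rw [besselTerm_eq_zero (Or.inr h), abs_zero]
    positivity
  obtain ⟨N, hN⟩ : ∃ N : ℕ, m + 2 * (j : ℤ) = N := ⟨(m + 2 * j).toNat, by omega⟩
  have hpow : |(x / 2) ^ (m + 2 * (j : ℤ))| ≤ M ^ m.natAbs * (M ^ 2) ^ j := by
    rw [hN, zpow_natCast, abs_pow, ← pow_mul, ← pow_add]
    calc |x / 2| ^ N ≤ M ^ N :=
          pow_le_pow_left₀ (abs_nonneg _) (by rw [abs_div, abs_two]; linarith) N
      _ ≤ _ := pow_le_pow_right₀ hM (by omega)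
  have hΓ := abs_inv_Gamma_intCast_add_one_le (m + j)
  push_cast at hΓ
  simp only [besselTerm, Int.cast_natCast]
  rw [Gamma_nat_eq_factorial, abs_mul, abs_mul, abs_inv, Nat.abs_cast]
  calc _ ≤ (j.factorial : ℝ)⁻¹ * 1 * (M ^ m.natAbs * (M ^ 2) ^ j) := by gcongr
    _ = _ := by ring

lemma summable_mul_pow_div_factorial (C r : ℝ) :
    Summable fun j : ℕ => C * r ^ j / j.factorial := by
  simpa [mul_div_assoc] using (Real.summable_pow_div_factorial r).mul_left C

lemma hasSum_besselTerm (m : ℤ) (x : ℝ) :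
    HasSum (fun j : ℕ => besselTerm m j x) (besselI m x) := by
  set M := |x| + 1
  have hM : 1 ≤ M := le_add_of_nonneg_left (abs_nonneg x)
  have hx : |x| ≤ 2 * M := by linarith
  rw [besselI_eq_tsum_besselTerm]
  exact (Summable.of_norm_bounded (summable_mul_pow_div_factorial _ _)
    fun j => abs_besselTerm_le m j hM hx).hasSum

lemma hasSum_besselTerm_sub_one (m : ℤ) (x : ℝ) :
    HasSum (fun j : ℕ => besselTerm m ((j : ℤ) - 1) x) (besselI m x) := by
  rw [← hasSum_nat_add_iff' 1]
  simpa [besselTerm_eq_zero (Or.inl (show (-1 : ℤ) < 0 by norm_num))] using hasSum_besselTerm m x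

lemma hasDerivAt_besselTerm (m j : ℤ) (x : ℝ) :
    HasDerivAt (besselTerm m j)
      ((besselTerm (m - 1) j x + besselTerm (m + 1) (j - 1) x) / 2) x := by
  by_cases hexp : m + 2 * j < 0
  · -- a negative exponent forces `j < 0` or `m + j < 0`, so all three terms vanish
    have hzero : besselTerm m j = fun _ => 0 := funext (besselTerm_eq_zero (by omega))
    rw [hzero, besselTerm_eq_zero (by omega), besselTerm_eq_zero (by omega), zero_add, zero_div]
    exact hasDerivAt_const x 0
  set A := (Gamma (j + 1))⁻¹
  set B := (Gamma (m + j + 1))⁻¹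
  have hz : HasDerivAt (besselTerm m j)
      (A * B * ((↑(m + 2 * j) * (x / 2) ^ (m + 2 * j - 1)) * (1 / 2))) x :=
    (((hasDerivAt_zpow _ _ (Or.inr (by omega))).comp x
      ((hasDerivAt_id x).div_const 2)).const_mul (A * B))
  refine hz.congr_deriv ?_
  have hA := mul_inv_Gamma_add_one (j : ℝ)
  have hB := mul_inv_Gamma_add_one ((m : ℝ) + j)
  simp only [besselTerm]
  rw [show m - 1 + 2 * j = m + 2 * j - 1 by ring, show m + 1 + 2 * (j - 1) = m + 2 * j - 1 by ring]
  push_cast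
  rw [show (m : ℝ) - 1 + j + 1 = m + j by ring, show (j : ℝ) - 1 + 1 = j by ring,
    show (m : ℝ) + 1 + (j - 1) + 1 = m + j + 1 by ring]
  linear_combination (A * (x / 2) ^ (m + 2 * j - 1) / 2) * hB
    + (B * (x / 2) ^ (m + 2 * j - 1) / 2) * hA

lemma hasDerivAt_besselI (m : ℤ) (x : ℝ) :
    HasDerivAt (besselI m) ((besselI (m - 1) x + besselI (m + 1) x) / 2) x := by
  set M := |x| + 1
  have hM : 1 ≤ M := le_add_of_nonneg_left (abs_nonneg x)
  have hxM : x ∈ Metric.ball (0 : ℝ) M := by simp [M]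
  set a : ℤ → ℕ → ℝ := fun m j => M ^ m.natAbs * (M ^ 2) ^ j / j.factorial
  have ha : ∀ m, Summable (a m) := fun m => summable_mul_pow_div_factorial _ _
  have hshift : Summable fun j => a (m + 1) (j - 1) :=
    (summable_nat_add_iff 1).mp (by simpa using ha (m + 1))
  have hbound : ∀ (j : ℕ), ∀ y ∈ Metric.ball (0 : ℝ) M,
      ‖(besselTerm (m - 1) j y + besselTerm (m + 1) ((j : ℤ) - 1) y) / 2‖
        ≤ (a (m - 1) j + a (m + 1) (j - 1)) / 2 := by
    intro j y hy
    have hy : |y| ≤ 2 * M := by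
      rw [Metric.mem_ball, dist_zero_right, Real.norm_eq_abs] at hy
      linarith
    have hlow := abs_besselTerm_le (m - 1) j hM hy
    have hup : |besselTerm (m + 1) ((j : ℤ) - 1) y| ≤ a (m + 1) (j - 1) := by
      rcases j with _ | i
      · rw [besselTerm_eq_zero (Or.inl (by norm_num)), abs_zero]
        positivity
      · simpa using abs_besselTerm_le (m + 1) i hM hy
    rw [Real.norm_eq_abs, abs_div, abs_two]
    gcongr
    exact (abs_add_le _ _).trans (add_le_add hlow hup)
  have hseries := hasDerivAt_tsum_of_isPreconnected (((ha (m - 1)).add hshift).div_const 2)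
    Metric.isOpen_ball (convex_ball (0 : ℝ) M).isPreconnected
    (fun (j : ℕ) y _ => hasDerivAt_besselTerm m j y) hbound hxM
    (hasSum_besselTerm m x).summable hxM
  rw [(((hasSum_besselTerm (m - 1) x).add (hasSum_besselTerm_sub_one (m + 1) x)).div_const 2).tsum_eq]
    at hseries
  exact hseries.congr_of_eventuallyEq
    (Filter.Eventually.of_forall fun y => besselI_eq_tsum_besselTerm m y)

lemma besselI_zero (m : ℤ) : besselI m 0 = if m = 0 then 1 else 0 := by
  rw [besselI_eq_tsum_besselTerm, tsum_eq_single 0]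
  · rcases eq_or_ne m 0 with rfl | hm
    · simp [besselTerm]
    · simp [besselTerm, hm, zero_zpow m hm]
  · intro j hj
    rcases lt_or_ge (m + j) 0 with h | h
    · exact besselTerm_eq_zero (Or.inr h) 0
    · simp [besselTerm, zero_zpow _ (show m + 2 * (j : ℤ) ≠ 0 by omega)]

lemma mul_div_rpow_half {a : ℝ} (ha : 0 < a) (b : ℝ) :
    a * (b / a) ^ (1 / 2 : ℝ) = √(a * b) := by
  calc a * (b / a) ^ (1 / 2 : ℝ) = √(a ^ 2) * √(b / a) := by
        rw [Real.sqrt_sq ha.le, Real.sqrt_eq_rpow]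
    _ = √(a * b) := by
        rw [← Real.sqrt_mul (sq_nonneg a)]
        congr 1
        field_simp

lemma mul_div_rpow_neg_half {a b : ℝ} (ha : 0 ≤ a) (hb : 0 < b) :
    b * (b / a) ^ (-(1 / 2) : ℝ) = √(a * b) := by
  rw [Real.rpow_neg (div_nonneg hb.le ha), ← Real.inv_rpow (div_nonneg hb.le ha), inv_div,
    mul_div_rpow_half hb, mul_comm]

noncomputable def constRatesTransition (lam mu : ℝ) (k n : ℤ) (t : ℝ) : ℝ :=
  exp (-(lam + mu) * t) * (mu / lam) ^ (((k - n : ℤ) : ℝ) / 2)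
    * besselI (n - k) (2 * t * √(lam * mu))

def kolmogorovForward (birth death : ℤ → ℝ) (p : ℤ → ℝ) (n : ℤ) : ℝ :=
  birth (n - 1) * p (n - 1) - (birth n + death n) * p n + death (n + 1) * p (n + 1)

lemma hasDerivAt_constRatesTransition {lam mu : ℝ} (hlam : 0 < lam) (hmu : 0 < mu)
    (k n : ℤ) (t : ℝ) :
    HasDerivAt (constRatesTransition lam mu k n)
      (kolmogorovForward (fun _ => lam) (fun _ => mu) (constRatesTransition lam mu k · t) n) t := by
  set c := mu / lam
  have hc : 0 < c := div_pos hmu hlam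
  set s := √(lam * mu)
  set P := c ^ (((k - n : ℤ) : ℝ) / 2)
  have hP_pred : c ^ (((k - (n - 1) : ℤ) : ℝ) / 2) = P * c ^ (1 / 2 : ℝ) := by
    rw [← rpow_add hc]
    push_cast
    ring_nf
  have hP_succ : c ^ (((k - (n + 1) : ℤ) : ℝ) / 2) = P * c ^ (-(1 / 2) : ℝ) := by
    rw [← rpow_add hc]
    push_cast
    ring_nf
  have hE : HasDerivAt (fun t => exp (-(lam + mu) * t)) (exp (-(lam + mu) * t) * -(lam + mu)) t :=
    by simpa using ((hasDerivAt_id t).const_mul (-(lam + mu))).exp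
  have hI := (hasDerivAt_besselI (n - k) (2 * t * s)).comp t
    (((hasDerivAt_id t).const_mul 2).mul_const s)
  have hp : HasDerivAt (constRatesTransition lam mu k n) _ t := (hE.mul_const P).mul hI
  refine hp.congr_deriv ?_
  simp only [kolmogorovForward, constRatesTransition]
  rw [hP_pred, hP_succ, show n - 1 - k = n - k - 1 by ring, show n + 1 - k = n - k + 1 by ring]
  linear_combination -(exp (-(lam + mu) * t) * P * besselI (n - k - 1) (2 * t * s))
      * mul_div_rpow_half hlam mu
    - (exp (-(lam + mu) * t) * P * besselI (n - k + 1) (2 * t * s))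
      * mul_div_rpow_neg_half hlam.le hmu

lemma constRatesTransition_zero (lam mu : ℝ) (k n : ℤ) :
    constRatesTransition lam mu k n 0 = if n = k then 1 else 0 := by
  rcases eq_or_ne n k with rfl | hnk
  · simp [constRatesTransition, besselI_zero]
  · simp [constRatesTransition, besselI_zero, sub_ne_zero.mpr hnk, hnk]

lemma kolmogorovForward_harmonic_transform {lam mu : ℝ} {ν : ℤ → ℝ} (hν : ∀ n, ν n ≠ 0)
    (hharm : ∀ n, lam * ν (n + 1) + mu * ν (n - 1) = (lam + mu) * ν n)
    (p : ℤ → ℝ) (k n : ℤ) :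
    kolmogorovForward (fun n => lam * ν (n + 1) / ν n) (fun n => mu * ν (n - 1) / ν n)
        (fun n => ν n / ν k * p n) n
      = ν n / ν k * kolmogorovForward (fun _ => lam) (fun _ => mu) p n := by
  simp only [kolmogorovForward, sub_add_cancel, add_sub_cancel_right]
  field_simp [hν]
  linear_combination -(p n * hharm n)

lemma harmonic_one_add_mul_zpow {lam mu : ℝ} (hlam : lam ≠ 0) (hmu : mu ≠ 0) (β : ℝ) (n : ℤ) :
    lam * (1 + β * (mu / lam) ^ (n + 1)) + mu * (1 + β * (mu / lam) ^ (n - 1))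
      = (lam + mu) * (1 + β * (mu / lam) ^ n) := by
  have hc : mu / lam ≠ 0 := div_ne_zero hmu hlam
  rw [zpow_add_one₀ hc, zpow_sub_one₀ hc]
  field_simp
  ring

theorem transformed_constant_rates_transition_probabilities_general
    (lam mu : ℝ) (hlam : 0 < lam) (hmu : 0 < mu)
    (β : ℝ) (hβ : 0 < β)
    (c : ℝ) (hc : c = mu / lam) (k : ℤ)
    (pt : ℤ → ℝ → ℝ)
    (hpt : ∀ (n : ℤ) (t : ℝ), 0 ≤ t →
      pt n t = (1 + β * c ^ n) / (1 + β * c ^ k)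
        * Real.exp (-(lam + mu) * t) * c ^ (((k - n : ℤ) : ℝ) / 2)
        * besselI (n - k) (2 * t * Real.sqrt (lam * mu))) :
    (∀ n : ℤ, ∀ t : ℝ, 0 ≤ t →
      HasDerivWithinAt (pt n)
        ((lam * (1 + β * c ^ (n - 1 + 1)) / (1 + β * c ^ (n - 1))) * pt (n - 1) t
          - (lam * (1 + β * c ^ (n + 1)) / (1 + β * c ^ n)
              + mu * (1 + β * c ^ (n - 1)) / (1 + β * c ^ n)) * pt n t
          + (mu * (1 + β * c ^ (n + 1 - 1)) / (1 + β * c ^ (n + 1))) * pt (n + 1) t)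
        (Set.Ici 0) t) ∧
    (∀ n : ℤ, pt n 0 = if n = k then 1 else 0) := by
  subst hc
  set ν : ℤ → ℝ := fun n => 1 + β * (mu / lam) ^ n
  have hν : ∀ n, ν n ≠ 0 := fun n => by positivity
  have hpt' : ∀ n, ∀ t, 0 ≤ t → pt n t = ν n / ν k * constRatesTransition lam mu k n t := by
    intro n t ht
    rw [hpt n t ht, constRatesTransition]
    ring
  refine ⟨fun n t ht => ?_, fun n => ?_⟩
  · have hderiv := ((hasDerivAt_constRatesTransition hlam hmu k n t).const_mul
      (ν n / ν k)).hasDerivWithinAt (s := Set.Ici 0)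
    rw [← kolmogorovForward_harmonic_transform hν (harmonic_one_add_mul_zpow hlam.ne' hmu.ne' β)] at hderiv
    refine (hderiv.congr (fun y hy => hpt' n y hy) (hpt' n t ht)).congr_deriv ?_
    rw [hpt' (n - 1) t ht, hpt' n t ht, hpt' (n + 1) t ht]
    rfl
  · rw [hpt' n 0 le_rfl, constRatesTransition_zero]
    split_ifs with h
    · rw [h, div_self (hν k), mul_one]
    · rw [mul_zero]

/-- The transformed transition probabilities
`p̃ k n t = ((1 + β cⁿ)/(1 + β cᵏ)) e^{-(λ+μ)t} c^{(k-n)/2} I_{n-k}(2t√(λμ))`,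
with `c = μ/λ`, solve the forward Kolmogorov equations with rates
`λ̃ n = λ (1 + β c^{n+1})/(1 + β cⁿ)` and `μ̃ n = μ (1 + β c^{n-1})/(1 + β cⁿ)`,
with the delta initial condition at `k`. -/
theorem transformed_constant_rates_transition_probabilities
    (lam mu : ℝ) (hlam : 0 < lam) (hmu : 0 < mu) (hne : lam ≠ mu)
    (β : ℝ) (hβ : 0 < β)
    (c : ℝ) (hc : c = mu / lam) (k : ℤ)
    (pt : ℤ → ℝ → ℝ)
    (hpt : ∀ (n : ℤ) (t : ℝ), 0 ≤ t →
      pt n t = (1 + β * c ^ n) / (1 + β * c ^ k)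
        * Real.exp (-(lam + mu) * t) * c ^ (((k - n : ℤ) : ℝ) / 2)
        * besselI (n - k) (2 * t * Real.sqrt (lam * mu))) :
    (∀ n : ℤ, ∀ t : ℝ, 0 ≤ t →
      HasDerivWithinAt (pt n)
        ((lam * (1 + β * c ^ (n - 1 + 1)) / (1 + β * c ^ (n - 1))) * pt (n - 1) t
          - (lam * (1 + β * c ^ (n + 1)) / (1 + β * c ^ n)
              + mu * (1 + β * c ^ (n - 1)) / (1 + β * c ^ n)) * pt n t
          + (mu * (1 + β * c ^ (n + 1 - 1)) / (1 + β * c ^ (n + 1))) * pt (n + 1) t)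
        (Set.Ici 0) t) ∧
    (∀ n : ℤ, pt n 0 = if n = k then 1 else 0) :=
  transformed_constant_rates_transition_probabilities_general lam mu hlam hmu β hβ c hc k pt hpt
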